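/- Let Ω₁, …, Ωₙ be nonempty closed convex sets with empty intersection in a Hilbert space X, and let x̄ minimize D(x) = max_i d(x, Ωᵢ) with r = D(x̄). Then the active index set I(x̄) = {i : d(x̄, Ωᵢ) = r} contains at least two indices, and for each i ∈ I(x̄), the intersection B̄(x̄; r) ∩ Ωᵢ is a singleton. -/

import Mathlib

/-!
Nearest points on closed convex subsets of a Hilbert space exist, and by strict convexity of the
norm the closed ball of radius `d(x, Ω)` about `x` meets a convex `Ω` in at most one point; this
gives the touching property. If `i₀` were the only active index, moving `x̄` slightly towards its
nearest point in `Ω i₀` would decrease `d(·, Ω i₀)` while, by continuity, keeping the other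
distances below `r`, contradicting the minimality of `D` at `x̄`. Here `x̄` differs from its
nearest point because `r > 0`, the sets having no common point.
-/

open Metric Filter Topology

theorem IsComplete.exists_dist_eq_infDist_of_convex {E : Type*} [NormedAddCommGroup E]
    [InnerProductSpace ℝ E] {s : Set E} (hs : IsComplete s) (hne : s.Nonempty)
    (hco : Convex ℝ s) (x : E) : ∃ p ∈ s, dist x p = infDist x s := by
  obtain ⟨p, hp, hnorm⟩ := exists_norm_eq_iInf_of_complete_convex hne hs hco x
  exact ⟨p, hp, by simp only [infDist_eq_iInf, dist_eq_norm, hnorm]⟩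

theorem Convex.subsingleton_closedBall_infDist_inter {E : Type*} [NormedAddCommGroup E]
    [NormedSpace ℝ E] [StrictConvexSpace ℝ E] {s : Set E} (hs : Convex ℝ s) (x : E) :
    (closedBall x (infDist x s) ∩ s).Subsingleton := by
  rintro p ⟨hpB, hp⟩ q ⟨hqB, hq⟩
  by_contra hpq
  have hmid_mem : (1 / 2 : ℝ) • p + (1 / 2 : ℝ) • q ∈ s :=
    hs hp hq (by norm_num) (by norm_num) (by norm_num)
  have hmid_lt := combo_mem_ball_of_ne hpB hqB hpq (by norm_num : (0 : ℝ) < 1 / 2)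
    (by norm_num : (0 : ℝ) < 1 / 2) (by norm_num)
  exact (mem_ball'.1 hmid_lt).not_ge (infDist_le_dist_of_mem hmid_mem)

theorem IsComplete.exists_closedBall_infDist_inter_eq_singleton {E : Type*}
    [NormedAddCommGroup E] [InnerProductSpace ℝ E] {s : Set E} (hs : IsComplete s)
    (hne : s.Nonempty) (hco : Convex ℝ s) (x : E) :
    ∃ p, closedBall x (infDist x s) ∩ s = {p} := by
  obtain ⟨p, hp, hpx⟩ := hs.exists_dist_eq_infDist_of_convex hne hco x
  exact ⟨p, (hco.subsingleton_closedBall_infDist_inter x).eq_singleton_of_mem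
    ⟨mem_closedBall'.2 hpx.le, hp⟩⟩

theorem frequently_infDist_lt_of_dist_eq_infDist {E : Type*} [NormedAddCommGroup E]
    [NormedSpace ℝ E] {s : Set E} {x p : E} (hp : p ∈ s) (hpx : dist x p = infDist x s)
    (hxp : x ≠ p) : ∃ᶠ y in 𝓝 x, infDist y s < infDist x s := by
  have htends : Tendsto (AffineMap.lineMap x p) (𝓝[>] (0 : ℝ)) (𝓝 x) := by
    simpa using (AffineMap.lineMap_continuous.tendsto' (0 : ℝ) x (by simp)).mono_left
      nhdsWithin_le_nhds
  refine htends.frequently (Eventually.frequently ?_)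
  filter_upwards [Ioo_mem_nhdsGT one_pos] with t ht
  calc infDist (AffineMap.lineMap x p t) s ≤ dist (AffineMap.lineMap x p t) p :=
        infDist_le_dist_of_mem hp
    _ = (1 - t) * dist x p := by
        rw [dist_lineMap_right, Real.norm_of_nonneg (by linarith [ht.2])]
    _ < infDist x s := by rw [← hpx]; nlinarith [ht.1, dist_pos.2 hxp]

theorem exists_ne_le_of_isMinOn_sup' {ι X α : Type*} [TopologicalSpace X] [LinearOrder α]
    [TopologicalSpace α] [OrderClosedTopology α] {s : Finset ι} (hs : s.Nonempty)
    {f : ι → X → α} {x : X} {i₀ : ι} (hf : ∀ i ∈ s, ContinuousAt (f i) x)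
    (hmin : IsMinOn (fun y => s.sup' hs (f · y)) Set.univ x) (hi₀ : i₀ ∈ s)
    (hdesc : ∃ᶠ y in 𝓝 x, f i₀ y < f i₀ x) : ∃ j ∈ s, j ≠ i₀ ∧ f i₀ x ≤ f j x := by
  by_contra! hlt
  have hnear : ∀ᶠ y in 𝓝 x, ∀ j ∈ s, j ≠ i₀ → f j y < f i₀ x := by
    refine (eventually_all_finset s).2 fun j hj => ?_
    by_cases hji : j = i₀
    · exact .of_forall fun _ hne => absurd hji hne
    · exact ((hf j hj).eventually_lt continuousAt_const (hlt j hj hji)).mono fun _ hy _ => hy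
  obtain ⟨y, hy₀, hy⟩ := (hdesc.and_eventually hnear).exists
  have hsup_lt : s.sup' hs (f · y) < f i₀ x := (Finset.sup'_lt_iff hs).2 fun j hj => by
    by_cases hji : j = i₀
    · exact hji ▸ hy₀
    · exact hy j hj hji
  exact ((Finset.le_sup' (f · x) hi₀).trans (hmin (Set.mem_univ y))).not_gt hsup_lt

/-- A smallest intersecting ball in a Hilbert space touches at least two of the
target sets: the active index set has at least two elements, and for each active
index the intersection of the smallest ball with the corresponding set is a
singleton. -/
theorem smallest_ball_touches_two_sets
    {X : Type*} [NormedAddCommGroup X] [InnerProductSpace ℝ X] [CompleteSpace X]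
    (n : ℕ) (hn : 1 < n) (Ω : Fin n → Set X)
    (hne : ∀ i, (Ω i).Nonempty) (hcl : ∀ i, IsClosed (Ω i))
    (hco : ∀ i, Convex ℝ (Ω i)) (hint : (⋂ i, Ω i) = ∅)
    (D : X → ℝ)
    (hD : D = fun x => Finset.univ.sup' (Finset.univ_nonempty_iff.2 ⟨⟨0, by omega⟩⟩)
      fun i => Metric.infDist x (Ω i))
    (xbar : X) (hmin : IsMinOn D Set.univ xbar)
    (r : ℝ) (hr : r = D xbar) :
    (∃ i j : Fin n, i ≠ j ∧ Metric.infDist xbar (Ω i) = r ∧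
        Metric.infDist xbar (Ω j) = r) ∧
      ∀ i : Fin n, Metric.infDist xbar (Ω i) = r →
        ∃ p : X, Metric.closedBall xbar r ∩ Ω i = {p} := by
  subst hD hr
  beta_reduce
  obtain ⟨i₀, -, hi₀⟩ := Finset.exists_mem_eq_sup' _ fun i => infDist xbar (Ω i)
  have hle : ∀ i, infDist xbar (Ω i) ≤ infDist xbar (Ω i₀) :=
    fun i => hi₀ ▸ Finset.le_sup' (fun i => infDist xbar (Ω i)) (Finset.mem_univ i)
  obtain ⟨p, hp, hpx⟩ :=
    (hcl i₀).isComplete.exists_dist_eq_infDist_of_convex (hne i₀) (hco i₀) xbar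
  have hxp : xbar ≠ p := by
    rintro rfl
    have hmem : xbar ∈ ⋂ i, Ω i := Set.mem_iInter.2 fun i =>
      ((hcl i).mem_iff_infDist_zero (hne i)).2 <|
        le_antisymm (infDist_zero_of_mem hp ▸ hle i) infDist_nonneg
    simp [hint] at hmem
  obtain ⟨j, -, hji₀, hj⟩ := exists_ne_le_of_isMinOn_sup' _
    (fun i _ => (continuous_infDist_pt (Ω i)).continuousAt) hmin (Finset.mem_univ i₀)
    (frequently_infDist_lt_of_dist_eq_infDist hp hpx hxp)
  refine ⟨⟨i₀, j, hji₀.symm, hi₀.symm, hi₀ ▸ le_antisymm (hle j) hj⟩, fun i hi => ?_⟩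
  rw [← hi]
  exact (hcl i).isComplete.exists_closedBall_infDist_inter_eq_singleton (hne i) (hco i) xbar
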